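/- Let ρ, σ be positive semidefinite matrices and let ρ₁ be positive semidefinite with supp ρ₁ ⊆ supp σ and ρ₁ ≤ ρ in the Loewner order. Then ρ₁ ≤ ρ̃. -/
import Mathlib


open Matrix Filter MeasureTheory
open scoped Topology Classical ComplexOrder

noncomputable section

/-- Functional calculus for Hermitian matrices (junk value `0` for non-Hermitian input). -/
def matFun (f : ℝ → ℝ) {n : ℕ} (A : Matrix (Fin n) (Fin n) ℂ) : Matrix (Fin n) (Fin n) ℂ :=
  if h : A.IsHermitian then
    (h.eigenvectorUnitary : Matrix (Fin n) (Fin n) ℂ) *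
      Matrix.diagonal (fun i => (f (h.eigenvalues i) : ℂ)) *
      star (h.eigenvectorUnitary : Matrix (Fin n) (Fin n) ℂ)
  else 0

/-- Square root of a positive semidefinite matrix. -/
def sqrtm {n : ℕ} (A : Matrix (Fin n) (Fin n) ℂ) : Matrix (Fin n) (Fin n) ℂ :=
  matFun Real.sqrt A

/-- Square root of the Moore–Penrose inverse of a positive semidefinite matrix. -/
def pinvSqrt {n : ℕ} (A : Matrix (Fin n) (Fin n) ℂ) : Matrix (Fin n) (Fin n) ℂ :=
  matFun (fun x => (Real.sqrt x)⁻¹) A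

/-- Moore–Penrose inverse of a positive semidefinite matrix. -/
def mpinv {n : ℕ} (A : Matrix (Fin n) (Fin n) ℂ) : Matrix (Fin n) (Fin n) ℂ :=
  matFun (fun x => x⁻¹) A

/-- Orthogonal projection onto the support of a positive semidefinite matrix. -/
def suppProj {n : ℕ} (A : Matrix (Fin n) (Fin n) ℂ) : Matrix (Fin n) (Fin n) ℂ :=
  matFun (fun x => if x = 0 then 0 else 1) A

/-- Commutative Radon–Nikodym derivative `d(ρ,σ) = σ^{-1/2} ρ σ^{-1/2}`. -/
def dRN {n : ℕ} (ρ σ : Matrix (Fin n) (Fin n) ℂ) : Matrix (Fin n) (Fin n) ℂ :=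
  pinvSqrt σ * ρ * pinvSqrt σ

/-- `supp ρ ⊆ supp σ`. -/
def suppLE {n : ℕ} (ρ σ : Matrix (Fin n) (Fin n) ℂ) : Prop :=
  LinearMap.range ρ.mulVecLin ≤ LinearMap.range σ.mulVecLin

/-- Loewner order `A ≤ B`. -/
def LoewnerLE {n : ℕ} (A B : Matrix (Fin n) (Fin n) ℂ) : Prop :=
  (B - A).PosSemidef

/-- The convention `0 · f(γ/0) := lim_{ε↓0} ε f(γ/ε)` (as a limsup, so that it is
always defined; for convex `f` the limit exists and coincides with it). -/
def zeroMulConv (f : ℝ → EReal) (γ : ℝ) : EReal :=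
  Filter.limsup (fun ε : ℝ => (ε : EReal) * f (γ / ε)) (𝓝[>] (0 : ℝ))

/-- Lift of a real valued function to `EReal` values. -/
def toE (f : ℝ → ℝ) : ℝ → EReal := fun y => ((f y : ℝ) : EReal)

/-- Classical `f`-divergence `D_f(p‖q) = ∑_x q(x) f(p(x)/q(x))`, with the convention
`0 · f(γ/0) := lim_{ε↓0} ε f(γ/ε)`. -/
def DfFinset (f : ℝ → EReal) {α : Type*} (X : Finset α) (p q : α → ℝ) : EReal :=
  ∑ x ∈ X, if q x = 0 then zeroMulConv f (p x) else (q x : EReal) * f (p x / q x)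

/-- A reverse test of `(ρ, σ)`: trace-one positive semidefinite matrices `Γ x`
and nonnegative weights `p, q` with `∑ p x • Γ x = ρ` and `∑ q x • Γ x = σ`. -/
def IsReverseTest {n k : ℕ} (ρ σ : Matrix (Fin n) (Fin n) ℂ)
    (Γ : Fin k → Matrix (Fin n) (Fin n) ℂ) (p q : Fin k → ℝ) : Prop :=
  (∀ x, (Γ x).PosSemidef) ∧ (∀ x, (Γ x).trace = 1) ∧ (∀ x, 0 ≤ p x) ∧ (∀ x, 0 ≤ q x) ∧
    ∑ x, (p x : ℂ) • Γ x = ρ ∧ ∑ x, (q x : ℂ) • Γ x = σ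

/-- Maximal `f`-divergence: infimum of `D_f(p‖q)` over all reverse tests of `(ρ,σ)`. -/
def DfMax (f : ℝ → EReal) {n : ℕ} (ρ σ : Matrix (Fin n) (Fin n) ℂ) : EReal :=
  ⨅ (k : ℕ) (Γ : Fin k → Matrix (Fin n) (Fin n) ℂ) (p : Fin k → ℝ) (q : Fin k → ℝ)
    (_ : IsReverseTest ρ σ Γ p q), DfFinset f Finset.univ p q

/-- Condition (FC): `f` is a proper closed convex function on `[0,∞)` with values in
`ℝ ∪ {+∞}` and `f 0 = 0`. -/
structure IsFC (f : ℝ → EReal) : Prop where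
  zero : f 0 = 0
  ne_bot : ∀ y : ℝ, 0 ≤ y → f y ≠ ⊥
  convex : ∀ ⦃y z : ℝ⦄, 0 ≤ y → 0 ≤ z → ∀ ⦃t : ℝ⦄, 0 ≤ t → t ≤ 1 →
    f (t * y + (1 - t) * z) ≤ (t : EReal) * f y + ((1 - t : ℝ) : EReal) * f z
  lsc : LowerSemicontinuousOn f (Set.Ici 0)

/-- A density matrix: positive semidefinite with trace one. -/
def IsDensity {n : ℕ} (ρ : Matrix (Fin n) (Fin n) ℂ) : Prop :=
  ρ.PosSemidef ∧ ρ.trace = 1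

/-- Trace preserving positive linear map. -/
def IsTPP {n m : ℕ} (Λ : Matrix (Fin n) (Fin n) ℂ →ₗ[ℂ] Matrix (Fin m) (Fin m) ℂ) : Prop :=
  (∀ A : Matrix (Fin n) (Fin n) ℂ, A.PosSemidef → (Λ A).PosSemidef) ∧
  (∀ A : Matrix (Fin n) (Fin n) ℂ, (Λ A).trace = A.trace)

/-- CPTP map: trace preserving, and `Λ ⊗ id_k` is positive for every `k`. -/
def IsCPTP {n m : ℕ} (Λ : Matrix (Fin n) (Fin n) ℂ →ₗ[ℂ] Matrix (Fin m) (Fin m) ℂ) : Prop :=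
  (∀ A : Matrix (Fin n) (Fin n) ℂ, (Λ A).trace = A.trace) ∧
  ∀ (k : ℕ) (M : Matrix (Fin n × Fin k) (Fin n × Fin k) ℂ), M.PosSemidef →
    (Matrix.of (fun i j : Fin m × Fin k =>
      Λ (Matrix.of fun r s => M (r, i.2) (s, j.2)) i.1 j.1)).PosSemidef

/-- The map `Λ_σ(Z) = Λ(σ)^{-1/2} Λ(σ^{1/2} Z σ^{1/2}) Λ(σ)^{-1/2}`. -/
def lamSigma {n m : ℕ} (Λ : Matrix (Fin n) (Fin n) ℂ →ₗ[ℂ] Matrix (Fin m) (Fin m) ℂ)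
    (σ Z : Matrix (Fin n) (Fin n) ℂ) : Matrix (Fin m) (Fin m) ℂ :=
  pinvSqrt (Λ σ) * Λ (sqrtm σ * Z * sqrtm σ) * pinvSqrt (Λ σ)

/-- Condition (F): `f : [0,∞) → ℝ` continuous, `f 0 = 0`, operator convex. -/
def IsOpConvexF (f : ℝ → ℝ) : Prop :=
  ContinuousOn f (Set.Ici 0) ∧ f 0 = 0 ∧
  ∀ (k : ℕ) (A B : Matrix (Fin k) (Fin k) ℂ), A.PosSemidef → B.PosSemidef →
    ∀ t : ℝ, 0 ≤ t → t ≤ 1 →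
      LoewnerLE (matFun f (t • A + (1 - t) • B)) (t • matFun f A + (1 - t) • matFun f B)

/-- The quantity `D'_f(ρ‖σ)`. -/
def DfPrime (f : ℝ → ℝ) {n : ℕ} (ρ σ : Matrix (Fin n) (Fin n) ℂ) : EReal :=
  if suppLE ρ σ then ((((σ * matFun f (dRN ρ σ)).trace.re : ℝ)) : EReal)
  else sInf { D : EReal | ∃ ρ₁ : Matrix (Fin n) (Fin n) ℂ,
    ρ₁.PosSemidef ∧ LoewnerLE ρ₁ ρ ∧ suppLE ρ₁ σ ∧
    D = ((((σ * matFun f (dRN ρ₁ σ)).trace.re : ℝ)) : EReal)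
        + zeroMulConv (toE f) (1 - ρ₁.trace.re) }

/-- Spectral projection of a Hermitian matrix onto the eigenvalue `c`. -/
def eigProj {n : ℕ} (A : Matrix (Fin n) (Fin n) ℂ) (c : ℝ) : Matrix (Fin n) (Fin n) ℂ :=
  matFun (fun x => if x = c then 1 else 0) A

/-- The (real) spectrum of a Hermitian matrix. -/
def matSpec {n : ℕ} (A : Matrix (Fin n) (Fin n) ℂ) : Set ℝ := {c | eigProj A c ≠ 0}

/-- weights `q` of the minimal reverse test (dominated case): `q(x) = tr[σ P_x]`. -/
def mrtQ {n : ℕ} (ρ σ : Matrix (Fin n) (Fin n) ℂ) (c : ℝ) : ℝ :=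
  ((σ * eigProj (dRN ρ σ) c).trace).re

/-- weights `p` of the minimal reverse test (dominated case): `p(x) = d_x q(x)`. -/
def mrtP {n : ℕ} (ρ σ : Matrix (Fin n) (Fin n) ℂ) (c : ℝ) : ℝ := c * mrtQ ρ σ c

/-- states of the minimal reverse test (dominated case): `Γ_x = σ^{1/2} P_x σ^{1/2} / q(x)`. -/
def mrtGamma {n : ℕ} (ρ σ : Matrix (Fin n) (Fin n) ℂ) (c : ℝ) : Matrix (Fin n) (Fin n) ℂ :=
  (mrtQ ρ σ c)⁻¹ • (sqrtm σ * eigProj (dRN ρ σ) c * sqrtm σ)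

/-- index set of the minimal reverse test (dominated case): the distinct eigenvalues of
`d(ρ,σ)` carrying positive weight. -/
def mrtX {n : ℕ} (ρ σ : Matrix (Fin n) (Fin n) ℂ) : Finset ℝ :=
  if h : (dRN ρ σ).IsHermitian then
    (Finset.univ.image h.eigenvalues).filter (fun c => mrtQ ρ σ c ≠ 0)
  else ∅

/-- `ρ̃ = ρ₁₁ − ρ₁₂ ρ₂₂⁻ ρ₂₁` (blocks w.r.t. the support projection of `σ`). -/
def rhoTilde {n : ℕ} (ρ σ : Matrix (Fin n) (Fin n) ℂ) : Matrix (Fin n) (Fin n) ℂ :=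
  suppProj σ * ρ * suppProj σ -
    (suppProj σ * ρ * (1 - suppProj σ)) *
      mpinv ((1 - suppProj σ) * ρ * (1 - suppProj σ)) *
        ((1 - suppProj σ) * ρ * suppProj σ)

/-- `ρ` itself if `supp ρ ⊆ supp σ`, and `ρ̃` otherwise. -/
def domPart {n : ℕ} (ρ σ : Matrix (Fin n) (Fin n) ℂ) : Matrix (Fin n) (Fin n) ℂ :=
  if suppLE ρ σ then ρ else rhoTilde ρ σ

/-- Index set of the minimal reverse test of `(ρ,σ)` (general case); the extra point
`x₀` is encoded as `none`. -/
def mrtXO {n : ℕ} (ρ σ : Matrix (Fin n) (Fin n) ℂ) : Finset (Option ℝ) :=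
  if suppLE ρ σ then (mrtX ρ σ).image some
  else insert none ((mrtX (rhoTilde ρ σ) σ).image some)

/-- weights `q` of the minimal reverse test (general case). -/
def mrtQO {n : ℕ} (ρ σ : Matrix (Fin n) (Fin n) ℂ) : Option ℝ → ℝ
  | none => 0
  | some c => mrtQ (domPart ρ σ) σ c

/-- weights `p` of the minimal reverse test (general case). -/
def mrtPO {n : ℕ} (ρ σ : Matrix (Fin n) (Fin n) ℂ) : Option ℝ → ℝ
  | none => 1 - ((rhoTilde ρ σ).trace).re
  | some c => mrtP (domPart ρ σ) σ c

/-- states of the minimal reverse test (general case). -/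
def mrtGammaO {n : ℕ} (ρ σ : Matrix (Fin n) (Fin n) ℂ) :
    Option ℝ → Matrix (Fin n) (Fin n) ℂ
  | none => ((1 - ((rhoTilde ρ σ).trace).re)⁻¹ : ℝ) • (ρ - rhoTilde ρ σ)
  | some c => mrtGamma (domPart ρ σ) σ c

/-- The recession slope `lim_{y→∞} f(y)/y` of a convex function (as a limsup). -/
def recSlope (f : ℝ → ℝ) : EReal :=
  Filter.limsup (fun y : ℝ => ((f y / y : ℝ) : EReal)) atTop

/-- Support of a Borel measure on `ℝ`. -/
def measSupp (μ : Measure ℝ) : Set ℝ :=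
  {t | ∀ ε : ℝ, 0 < ε → 0 < μ (Set.Ioo (t - ε) (t + ε))}

/-- Löwner representation of an operator convex function:
`f(y) = a y + b y² + ∫ (y/(1+t) − y/(y+t)) dμ(t)` with `b ≥ 0` and `μ` a nonnegative
Borel measure on `(0,∞)` with `∫ (1+t)⁻² dμ(t) < ∞`. -/
def IsLownerRep (f : ℝ → ℝ) (a b : ℝ) (μ : Measure ℝ) : Prop :=
  0 ≤ b ∧ μ (Set.Iic 0) = 0 ∧ Integrable (fun t : ℝ => ((1 + t) ^ 2)⁻¹) μ ∧
    ∀ y : ℝ, 0 ≤ y → f y = a * y + b * y ^ 2 + ∫ t, (y / (1 + t) - y / (y + t)) ∂μ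


section AuxStmt12

variable {n : ℕ} {A : Matrix (Fin n) (Fin n) ℂ}

lemma matFun_of_isHermitian (f : ℝ → ℝ) (h : A.IsHermitian) :
    matFun f A = (h.eigenvectorUnitary : Matrix (Fin n) (Fin n) ℂ) *
      Matrix.diagonal (fun i => (f (h.eigenvalues i) : ℂ)) *
      star (h.eigenvectorUnitary : Matrix (Fin n) (Fin n) ℂ) := dif_pos h

lemma matFun_isHermitian (f : ℝ → ℝ) (h : A.IsHermitian) : (matFun f A).IsHermitian := by
  rw [matFun_of_isHermitian f h]
  have h1 : (star fun i : Fin n => ((f (h.eigenvalues i) : ℝ) : ℂ)) =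
      fun i : Fin n => ((f (h.eigenvalues i) : ℝ) : ℂ) :=
    funext fun i => Complex.conj_ofReal _
  unfold Matrix.IsHermitian
  simp only [Matrix.star_eq_conjTranspose, conjTranspose_mul, diagonal_conjTranspose,
    conjTranspose_conjTranspose, h1, mul_assoc]

lemma matFun_mul_matFun (f g : ℝ → ℝ) (h : A.IsHermitian) :
    matFun f A * matFun g A = matFun (fun x => f x * g x) A := by
  rw [matFun_of_isHermitian f h, matFun_of_isHermitian g h,
    matFun_of_isHermitian (fun x => f x * g x) h]
  have hu : (star (h.eigenvectorUnitary : Matrix (Fin n) (Fin n) ℂ)) *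
      (h.eigenvectorUnitary : Matrix (Fin n) (Fin n) ℂ) = 1 :=
    Matrix.mem_unitaryGroup_iff'.mp h.eigenvectorUnitary.2
  calc _ = (h.eigenvectorUnitary : Matrix (Fin n) (Fin n) ℂ) *
      ((Matrix.diagonal (fun i => (f (h.eigenvalues i) : ℂ))) *
      (((star (h.eigenvectorUnitary : Matrix (Fin n) (Fin n) ℂ)) *
      ((h.eigenvectorUnitary : Matrix (Fin n) (Fin n) ℂ) *
      (Matrix.diagonal (fun i => (g (h.eigenvalues i) : ℂ)) *
      star (h.eigenvectorUnitary : Matrix (Fin n) (Fin n) ℂ)))))) := by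
        simp only [mul_assoc]
    _ = _ := by
        rw [← mul_assoc (star _) _, hu, one_mul, ← mul_assoc, ← mul_assoc,
          mul_assoc _ (Matrix.diagonal _) (Matrix.diagonal _), diagonal_mul_diagonal]
        congr 2
        funext i
        push_cast
        ring

lemma matFun_id (h : A.IsHermitian) : matFun (fun x => x) A = A := by
  rw [matFun_of_isHermitian _ h]; exact h.spectral_theorem.symm

lemma matFun_congr {f g : ℝ → ℝ} (h : A.IsHermitian) (hfg : ∀ x, f x = g x) :
    matFun f A = matFun g A := by
  rw [matFun_of_isHermitian f h, matFun_of_isHermitian g h]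
  simp only [hfg]

lemma suppProj_mul_self (h : A.IsHermitian) : suppProj A * A = A := by
  have := matFun_mul_matFun (fun x => if x = 0 then 0 else 1) (fun x => x) h
  rw [matFun_id h] at this
  unfold suppProj
  rw [this, matFun_congr h (g := fun x => x) (fun x => by by_cases hx : x = 0 <;> simp [hx]),
    matFun_id h]

lemma mpinv_isHermitian (h : A.IsHermitian) : (mpinv A).IsHermitian :=
  matFun_isHermitian _ h

lemma self_mul_mpinv (h : A.IsHermitian) : A * mpinv A = suppProj A := by
  have := matFun_mul_matFun (fun x => x) (fun x => x⁻¹) h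
  rw [matFun_id h] at this
  unfold mpinv suppProj at *
  rw [this]
  exact matFun_congr h (fun x => by by_cases hx : x = 0 <;> simp [hx])

lemma suppProj_mul_mpinv (h : A.IsHermitian) : suppProj A * mpinv A = mpinv A := by
  unfold mpinv suppProj
  rw [matFun_mul_matFun _ _ h]
  exact matFun_congr h (fun x => by by_cases hx : x = 0 <;> simp [hx])

lemma mpinv_mul_mul_mpinv (h : A.IsHermitian) : mpinv A * A * mpinv A = mpinv A := by
  have h1 := matFun_mul_matFun (fun x => x⁻¹) (fun x => x) h
  rw [matFun_id h] at h1
  unfold mpinv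
  rw [h1, matFun_mul_matFun _ _ h]
  exact matFun_congr h (fun x => by by_cases hx : x = 0 <;> field_simp)

/-- If `p * A = A` then `p * mpinv A = mpinv A`, for Hermitian `A`. -/
lemma proj_mul_mpinv (h : A.IsHermitian) {p : Matrix (Fin n) (Fin n) ℂ}
    (hp : p * A = A) : p * mpinv A = mpinv A := by
  have hS : p * suppProj A = suppProj A := by
    rw [← self_mul_mpinv h, ← mul_assoc, hp]
  calc p * mpinv A = p * (suppProj A * mpinv A) := by rw [suppProj_mul_mpinv h]
    _ = (p * suppProj A) * mpinv A := by rw [mul_assoc]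
    _ = suppProj A * mpinv A := by rw [hS]
    _ = mpinv A := suppProj_mul_mpinv h

lemma suppProj_isHermitian (h : A.IsHermitian) : (suppProj A).IsHermitian :=
  matFun_isHermitian _ h

lemma suppProj_idem (h : A.IsHermitian) : suppProj A * suppProj A = suppProj A := by
  unfold suppProj
  rw [matFun_mul_matFun _ _ h]
  exact matFun_congr h (fun x => by by_cases hx : x = 0 <;> simp [hx])

/-- support absorption for `ρ₁` with `supp ρ₁ ⊆ supp σ`. -/
lemma suppProj_mul_of_suppLE {ρ₁ σ : Matrix (Fin n) (Fin n) ℂ} (hσ : σ.IsHermitian)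
    (hs : suppLE ρ₁ σ) : suppProj σ * ρ₁ = ρ₁ := by
  ext i j
  have hcol : ∃ v, σ.mulVec v = fun k => ρ₁ k j := by
    have : (fun k => ρ₁ k j) ∈ LinearMap.range σ.mulVecLin := by
      apply hs
      refine ⟨Pi.single j 1, ?_⟩
      funext k
      simp [Matrix.mulVecLin_apply, Matrix.mulVec, dotProduct, Pi.single_apply]
    obtain ⟨v, hv⟩ := this
    exact ⟨v, hv⟩
  obtain ⟨v, hv⟩ := hcol
  have : (suppProj σ * ρ₁) i j = ((suppProj σ * σ).mulVec v) i := by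
    rw [← Matrix.mulVec_mulVec, hv]
    simp [Matrix.mul_apply, Matrix.mulVec, dotProduct]
  rw [this, suppProj_mul_self hσ, hv]

end AuxStmt12

/-- `ρ̃` is the largest positive semidefinite matrix below `ρ` that is
supported on `supp σ`. -/
theorem stmt12 {n : ℕ} (ρ σ ρ₁ : Matrix (Fin n) (Fin n) ℂ)
    (hρ : ρ.PosSemidef) (hσ : σ.PosSemidef) (hρ₁ : ρ₁.PosSemidef)
    (hsupp : suppLE ρ₁ σ) (hle : LoewnerLE ρ₁ ρ) :
    LoewnerLE ρ₁ (rhoTilde ρ σ) := by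
  obtain ⟨e, he_def⟩ : ∃ e, e = suppProj σ := ⟨_, rfl⟩
  obtain ⟨p, hp_def⟩ : ∃ p : Matrix (Fin n) (Fin n) ℂ, p = 1 - e := ⟨_, rfl⟩
  obtain ⟨A, hA_def⟩ : ∃ A : Matrix (Fin n) (Fin n) ℂ, A = ρ - ρ₁ := ⟨_, rfl⟩
  have hA : A.PosSemidef := by rw [hA_def]; exact hle
  have hAh : Aᴴ = A := hA.1
  have heh : eᴴ = e := by rw [he_def]; exact suppProj_isHermitian hσ.1
  have he2 : e * e = e := by rw [he_def]; exact suppProj_idem hσ.1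
  have hph : pᴴ = p := by rw [hp_def, conjTranspose_sub, conjTranspose_one, heh]
  have hp2 : p * p = p := by
    rw [hp_def]; simp only [sub_mul, mul_sub, one_mul, mul_one, he2]; abel
  -- ρ₁ absorption
  have heρ₁ : e * ρ₁ = ρ₁ := by rw [he_def]; exact suppProj_mul_of_suppLE hσ.1 hsupp
  have hρ₁e : ρ₁ * e = ρ₁ := by
    have := congrArg conjTranspose heρ₁
    rwa [conjTranspose_mul, heh, hρ₁.1] at this
  have hpρ₁ : p * ρ₁ = 0 := by rw [hp_def, sub_mul, one_mul, heρ₁, sub_self]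
  have hρ₁p : ρ₁ * p = 0 := by rw [hp_def, mul_sub, mul_one, hρ₁e, sub_self]
  -- blocks of A vs blocks of ρ
  have hblk11 : e * A * e = e * ρ * e - ρ₁ := by
    rw [hA_def, mul_sub, sub_mul, heρ₁, hρ₁e]
  have hblk12 : e * A * p = e * ρ * p := by
    rw [hA_def, mul_sub, sub_mul, heρ₁, hρ₁p, sub_zero]
  have hblk21 : p * A * e = p * ρ * e := by
    rw [hA_def, mul_sub, hpρ₁, sub_zero]
  have hblk22 : p * A * p = p * ρ * p := by
    rw [hA_def, mul_sub, hpρ₁, sub_zero]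
  obtain ⟨H, hH_def⟩ : ∃ H : Matrix (Fin n) (Fin n) ℂ, H = p * A * p := ⟨_, rfl⟩
  rw [← hH_def] at hblk22
  have hHh : H.IsHermitian := by
    unfold Matrix.IsHermitian
    rw [hH_def, conjTranspose_mul, conjTranspose_mul, hph, hAh, mul_assoc]
  obtain ⟨M, hM_def⟩ : ∃ M : Matrix (Fin n) (Fin n) ℂ, M = mpinv H := ⟨_, rfl⟩
  have hMh : Mᴴ = M := by rw [hM_def]; exact mpinv_isHermitian hHh
  have hpH : p * H = H := by rw [hH_def, ← mul_assoc, ← mul_assoc, hp2]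
  have hpM : p * M = M := by rw [hM_def]; exact proj_mul_mpinv hHh hpH
  have hMp : M * p = M := by
    have := congrArg conjTranspose hpM
    rwa [conjTranspose_mul, hph, hMh] at this
  have hMHM : M * H * M = M := by rw [hM_def]; exact mpinv_mul_mul_mpinv hHh
  have hMAM : M * A * M = M := by
    calc M * A * M = (M * p) * A * (p * M) := by rw [hMp, hpM]
      _ = M * H * M := by rw [hH_def]; noncomm_ring
      _ = M := hMHM
  -- the conjugating matrix
  obtain ⟨K, hK_def⟩ : ∃ K : Matrix (Fin n) (Fin n) ℂ, K = e - M * (p * A * e) := ⟨_, rfl⟩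
  have hKh : Kᴴ = e - (e * A * p) * M := by
    rw [hK_def, conjTranspose_sub, heh, conjTranspose_mul, conjTranspose_mul,
      conjTranspose_mul, heh, hAh, hph, hMh]
    noncomm_ring
  obtain ⟨X, hX_def⟩ : ∃ X : Matrix (Fin n) (Fin n) ℂ, X = (e * A * p) * M * (p * A * e) :=
    ⟨_, rfl⟩
  have hexp : Kᴴ * A * K = e * A * e - X := by
    rw [hKh, hK_def]
    have t2 : e * A * (M * (p * A * e)) = X := by
      conv_lhs => rw [← hpM]
      rw [hX_def]; noncomm_ring
    have t3 : (e * A * p) * M * A * e = X := by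
      conv_lhs => rw [← hMp]
      rw [hX_def]; noncomm_ring
    have t4 : (e * A * p) * M * (A * (M * (p * A * e))) = X := by
      calc (e * A * p) * M * (A * (M * (p * A * e)))
          = (e * A * p) * (M * A * M) * (p * A * e) := by noncomm_ring
        _ = X := by rw [hMAM, hX_def]
    calc (e - e * A * p * M) * A * (e - M * (p * A * e))
        = e * A * e - e * A * (M * (p * A * e)) - ((e * A * p) * M * A * e
            - (e * A * p) * M * (A * (M * (p * A * e)))) := by noncomm_ring
      _ = e * A * e - X - (X - X) := by rw [t2, t3, t4]
      _ = e * A * e - X := by abel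
  -- identify with rhoTilde minus ρ₁
  have hM' : M = mpinv (p * ρ * p) := by rw [hM_def, hblk22]
  have hrt : rhoTilde ρ σ - ρ₁ = Kᴴ * A * K := by
    rw [hexp, hX_def, hblk11, hblk12, hblk21]
    unfold rhoTilde
    rw [← he_def, ← hp_def, ← hM']
    abel
  unfold LoewnerLE
  rw [hrt]
  exact hA.conjTranspose_mul_mul_same K


end
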